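/- If R is a right mininjective ring with ACC on right annihilators in which the right socle S_r is essential as a right ideal, then J(R) = l(S_r) = Z_r(R), and this ideal is nilpotent. -/
import Mathlib


open MulOpposite in
/-- Right ideals of `R`, as submodules of `R` over `Rᵐᵒᵖ`. -/
abbrev RIdeal (R : Type*) [Ring R] := Submodule Rᵐᵒᵖ R

section Defs
variable (R : Type*) [Ring R]

/-- Left annihilator of a subset. -/
def lAnn (X : Set R) : Set R := {a | ∀ x ∈ X, a * x = 0}

/-- Right annihilator of a subset. -/
def rAnn (X : Set R) : Set R := {a | ∀ x ∈ X, x * a = 0}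

/-- Right annihilator of a subset, as a right ideal. -/
def rAnnI (X : Set R) : RIdeal R where
  carrier := rAnn R X
  add_mem' := by intro a b ha hb x hx; rw [mul_add, ha x hx, hb x hx, add_zero]
  zero_mem' := by intro x hx; rw [mul_zero]
  smul_mem' := by
    intro c a ha x hx
    show x * (a * c.unop) = 0
    rw [← mul_assoc, ha x hx, zero_mul]

/-- `R` is left P-injective: `rl(a) = aR` for every `a`. -/
def IsLeftPInjective : Prop :=
  ∀ a x : R, (∀ u : R, u * a = 0 → u * x = 0) ↔ ∃ s : R, x = a * s

/-- `R` is left 2-injective. -/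
def IsLeft2Injective : Prop :=
  ∀ (a b : R) (f : ↥(Submodule.span R ({a, b} : Set R)) →ₗ[R] R),
    ∃ g : R →ₗ[R] R, ∀ x : ↥(Submodule.span R ({a, b} : Set R)), g (x : R) = f x

/-- `R` is left FP-injective: every matrix ring over `R` is left P-injective. -/
def IsLeftFPInjective : Prop :=
  ∀ n : ℕ, IsLeftPInjective (Matrix (Fin n) (Fin n) R)

/-- A left ideal is small if `K + I = R` implies `K = R`. -/
def IsSmallLeftIdeal (I : Ideal R) : Prop := ∀ K : Ideal R, K ⊔ I = ⊤ → K = ⊤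

/-- A complement left ideal: maximal with respect to intersecting some left ideal trivially. -/
def IsComplementLeftIdeal (C : Ideal R) : Prop :=
  ∃ S : Ideal R, C ⊓ S = ⊥ ∧ ∀ C' : Ideal R, C ≤ C' → C' ⊓ S = ⊥ → C' = C

/-- A right ideal is essential in `R`. -/
def IsEssentialRIdeal (I : RIdeal R) : Prop := ∀ K : RIdeal R, K ⊓ I = ⊥ → K = ⊥

/-- The right socle: the sum of all simple (minimal) right ideals. -/
def rSocle : RIdeal R := sSup {m : RIdeal R | IsSimpleModule Rᵐᵒᵖ m}

/-- The right singular ideal. -/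
def rSingular : Set R := {a | IsEssentialRIdeal R (rAnnI R {a})}

/-- ACC on right annihilators. -/
def ACCOnRightAnnihilators : Prop :=
  ∀ f : ℕ → Set R, (∀ n, ∃ X : Set R, f n = rAnn R X) → (∀ n, f n ⊆ f (n + 1)) →
    ∃ n, ∀ m, n ≤ m → f m = f n

/-- The Jacobson radical, as a set. -/
def jacobsonSet : Set R := (TwoSidedIdeal.jacobson (⊥ : TwoSidedIdeal R) : Set R)

/-- A subset is nilpotent if products of some fixed length of its elements vanish. -/
def IsNilpotentSet (J : Set R) : Prop :=
  ∃ n : ℕ, ∀ f : Fin (n + 1) → R, (∀ i, f i ∈ J) → (List.ofFn f).prod = 0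

/-- `R` is quasi-Frobenius: left noetherian and left self-injective. -/
def IsQuasiFrobenius : Prop := IsNoetherianRing R ∧ Module.Injective R R

/-- `R` is right mininjective. -/
def IsRightMininjective : Prop :=
  ∀ (I : RIdeal R), IsSimpleModule Rᵐᵒᵖ I → ∀ f : I →ₗ[Rᵐᵒᵖ] R,
    ∃ c : R, ∀ x : I, f x = c * (x : R)

/-- `R` is left mininjective. -/
def IsLeftMininjective : Prop :=
  ∀ (I : Ideal R), IsSimpleModule R I → ∀ f : I →ₗ[R] R,
    ∃ c : R, ∀ x : I, f x = (x : R) * c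

/-- `R` is right simple injective. -/
def IsRightSimpleInjective : Prop :=
  ∀ (I : RIdeal R) (f : I →ₗ[Rᵐᵒᵖ] R), IsSimpleModule Rᵐᵒᵖ (LinearMap.range f) →
    ∃ c : R, ∀ x : I, f x = c * (x : R)

/-- `R` is left CS: every left ideal is essential in a direct summand of `R`. -/
def IsLeftCS : Prop :=
  ∀ I : Ideal R, ∃ K : Ideal R, (∃ K' : Ideal R, IsCompl K K') ∧ I ≤ K ∧
    ∀ L : Ideal R, L ≤ K → L ⊓ I = ⊥ → L = ⊥

/-- `R` is left min-CS: every minimal left ideal is essential in a direct summand. -/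
def IsLeftMinCS : Prop :=
  ∀ I : Ideal R, IsSimpleModule R I → ∃ K : Ideal R, (∃ K' : Ideal R, IsCompl K K') ∧ I ≤ K ∧
    ∀ L : Ideal R, L ≤ K → L ⊓ I = ⊥ → L = ⊥

/-- `R` is right Johns: right noetherian and every right ideal is a right annihilator. -/
def IsRightJohns : Prop :=
  IsNoetherianRing Rᵐᵒᵖ ∧ ∀ I : RIdeal R, ∃ X : Set R, (I : Set R) = rAnn R X

end Defs

section MoreDefs
variable (R : Type*) [Ring R]

/-- Left annihilator of a subset, as a left ideal. -/
def lAnnI (X : Set R) : Ideal R where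
  carrier := lAnn R X
  add_mem' := by intro a b ha hb x hx; rw [add_mul, ha x hx, hb x hx, add_zero]
  zero_mem' := by intro x hx; rw [zero_mul]
  smul_mem' := by
    intro c a ha x hx
    show c * a * x = 0
    rw [mul_assoc, ha x hx, mul_zero]

/-- A left ideal is essential in `R`. -/
def IsEssentialLIdeal (I : Ideal R) : Prop := ∀ K : Ideal R, K ⊓ I = ⊥ → K = ⊥

/-- The left singular ideal `Z_l`. -/
def lSingular : Set R := {a | IsEssentialLIdeal R (lAnnI R {a})}

end MoreDefs


section AuxProof
variable {R : Type*} [Ring R]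

lemma mem_rAnnI_singleton' {a x : R} : x ∈ rAnnI R {a} ↔ a * x = 0 :=
  ⟨fun h => h a rfl, fun h y hy => by rw [Set.mem_singleton_iff.mp hy]; exact h⟩

/-- Left multiplication as an `Rᵐᵒᵖ`-linear map. -/
def lmulL (a : R) : R →ₗ[Rᵐᵒᵖ] R where
  toFun x := a * x
  map_add' x y := mul_add a x y
  map_smul' c x := by
    show a * (x * c.unop) = (a * x) * c.unop
    rw [mul_assoc]

lemma simple_ne_bot' {K : RIdeal R} (h : IsSimpleModule Rᵐᵒᵖ K) : K ≠ ⊥ := by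
  intro hK
  haveI := h
  have := IsSimpleModule.nontrivial Rᵐᵒᵖ ↥K
  haveI : Subsingleton ↥K := by
    rw [hK]
    exact ⟨fun a b => Subtype.ext (by
      have ha := a.2
      have hb := b.2
      rw [Submodule.mem_bot] at ha hb
      rw [ha, hb])⟩
  exact false_of_nontrivial_of_subsingleton ↥K

lemma simple_inf_or_le' {K A : RIdeal R} (h : IsSimpleModule Rᵐᵒᵖ K) :
    K ⊓ A = ⊥ ∨ K ≤ A := by
  haveI := h
  rcases eq_bot_or_eq_top (A.comap K.subtype) with hN | hN
  · left
    rw [eq_bot_iff]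
    intro x hx
    have : (⟨x, hx.1⟩ : ↥K) ∈ A.comap K.subtype := hx.2
    rw [hN, Submodule.mem_bot] at this
    have : x = 0 := congrArg Subtype.val this
    simp [this]
  · right
    intro x hx
    have : (⟨x, hx⟩ : ↥K) ∈ A.comap K.subtype := by rw [hN]; trivial
    exact this

/-- Z_r ⊆ l(S_r) (no hypotheses needed). -/
lemma rSingular_subset_lAnn : rSingular R ⊆ lAnn R (rSocle R : Set R) := by
  intro a ha x hx
  suffices hs : rSocle R ≤ rAnnI R {a} by
    exact mem_rAnnI_singleton'.mp (hs hx)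
  apply sSup_le
  intro K hK
  have hK' : IsSimpleModule Rᵐᵒᵖ ↥K := hK
  rcases simple_inf_or_le' (A := rAnnI R {a}) hK' with hb | hle
  · exact absurd (ha K hb) (simple_ne_bot' hK')
  · exact hle

/-- l(S_r) ⊆ Z_r when the socle is essential. -/
lemma lAnn_subset_rSingular (hess : IsEssentialRIdeal R (rSocle R)) :
    lAnn R (rSocle R : Set R) ⊆ rSingular R := by
  intro a ha K hK
  apply hess K
  rw [eq_bot_iff]
  intro x hx
  rw [← hK]
  exact ⟨hx.1, mem_rAnnI_singleton'.mpr (ha x hx.2)⟩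

/-- J ⊆ l(S_r) for right mininjective rings. -/
lemma jac_subset_lAnn (hmin : IsRightMininjective R) :
    jacobsonSet R ⊆ lAnn R (rSocle R : Set R) := by
  intro a ha x hx
  suffices hs : rSocle R ≤ rAnnI R {a} by
    exact mem_rAnnI_singleton'.mp (hs hx)
  apply sSup_le
  intro K hK
  have hK' : IsSimpleModule Rᵐᵒᵖ ↥K := hK
  haveI := hK'
  by_contra hnot
  obtain ⟨k, hk, hk'⟩ := SetLike.not_le_iff_exists.mp hnot
  rw [mem_rAnnI_singleton'] at hk'
  -- f : K → R, x ↦ a * x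
  set f : ↥K →ₗ[Rᵐᵒᵖ] R := (lmulL a).comp K.subtype with hf
  have hfk : f ⟨k, hk⟩ = a * k := rfl
  have hinj : Function.Injective f := by
    rw [← LinearMap.ker_eq_bot]
    rcases eq_bot_or_eq_top (LinearMap.ker f) with h | h
    · exact h
    · exfalso
      apply hk'
      have : (⟨k, hk⟩ : ↥K) ∈ LinearMap.ker f := by rw [h]; trivial
      rw [LinearMap.mem_ker, hfk] at this
      exact this
  set e := LinearEquiv.ofInjective f hinj with he
  haveI hsimple : IsSimpleModule Rᵐᵒᵖ ↥(LinearMap.range f) := IsSimpleModule.congr e.symm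
  set g : ↥(LinearMap.range f) →ₗ[Rᵐᵒᵖ] R := K.subtype.comp e.symm.toLinearMap with hg
  obtain ⟨c, hc⟩ := hmin (LinearMap.range f) hsimple g
  have hx2 : ∀ y : ↥K, (y : R) = c * (a * (y : R)) := by
    intro y
    have h1 := hc (e y)
    have h2 : g (e y) = (y : R) := by
      show (K.subtype) (e.symm (e y)) = (y : R)
      rw [LinearEquiv.symm_apply_apply]
      rfl
    have h3 : ((e y : ↥(LinearMap.range f)) : R) = a * (y : R) := rfl
    rw [h2, h3] at h1
    exact h1
  obtain ⟨z, hz⟩ := TwoSidedIdeal.mem_jacobson_iff.mp ha (-c)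
  rw [TwoSidedIdeal.mem_bot] at hz
  have hk0 : k = 0 := by
    have h4 := congrArg (fun t => t * k) hz
    simp only [add_mul, sub_mul, one_mul, zero_mul] at h4
    have h5 : z * -c * a * k = -(z * k) := by
      rw [mul_assoc, mul_assoc, neg_mul, ← hx2 ⟨k, hk⟩, mul_neg]
    rw [h5] at h4
    rw [neg_add_cancel, zero_sub, neg_eq_zero] at h4
    exact h4
  exact hk' (by rw [hk0, mul_zero])

/-- Products of `n` elements of the right singular ideal. -/
def zProd (R : Type*) [Ring R] (n : ℕ) : Set R :=
  {x | ∃ f : Fin n → R, (∀ i, f i ∈ rSingular R) ∧ (List.ofFn f).prod = x}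

lemma zProd_decomp {n : ℕ} {q : R} (hq : q ∈ zProd R (n + 1)) :
    ∃ p ∈ zProd R n, ∃ z ∈ rSingular R, q = p * z := by
  obtain ⟨f, hf, rfl⟩ := hq
  refine ⟨(List.ofFn fun i : Fin n => f i.castSucc).prod,
    ⟨_, fun i => hf _, rfl⟩, f (Fin.last n), hf _, ?_⟩
  rw [List.ofFn_succ', List.prod_concat]

lemma rAnn_zProd_mono (n : ℕ) : rAnn R (zProd R (n + 1)) ⊆ rAnn R (zProd R (n + 2)) := by
  intro a ha q hq
  obtain ⟨f, hf, rfl⟩ := hq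
  rw [List.ofFn_succ, List.prod_cons, mul_assoc]
  have : (List.ofFn fun i : Fin (n+1) => f i.succ).prod * a = 0 :=
    ha _ ⟨_, fun i => hf _, rfl⟩
  rw [this, mul_zero]

lemma exists_max_ann (hacc : ACCOnRightAnnihilators R) (P : R → Prop) (a₀ : R) (h0 : P a₀) :
    ∃ a, P a ∧ ∀ b, P b → rAnn R {a} ⊆ rAnn R {b} → rAnn R {b} = rAnn R {a} := by
  by_contra h
  push_neg at h
  choose b hb1 hb2 hb3 using h
  let g : ℕ → {a : R // P a} := fun n =>
    Nat.rec ⟨a₀, h0⟩ (fun _ p => ⟨b p.1 p.2, hb1 p.1 p.2⟩) n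
  obtain ⟨n, hn⟩ := hacc (fun n => rAnn R {(g n).1}) (fun n => ⟨{(g n).1}, rfl⟩)
    (fun n => hb2 (g n).1 (g n).2)
  exact hb3 (g n).1 (g n).2 (hn (n + 1) (Nat.le_succ n))

lemma exists_kill {z a : R} (hz : z ∈ rSingular R) (ha : a ≠ 0) :
    ∃ r, a * r ≠ 0 ∧ z * (a * r) = 0 := by
  have hK : LinearMap.range (lmulL a) ⊓ rAnnI R {z} ≠ ⊥ := by
    intro h
    have hbot := hz _ h
    apply ha
    have hmem : a ∈ LinearMap.range (lmulL a) := ⟨1, mul_one a⟩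
    rw [hbot, Submodule.mem_bot] at hmem
    exact hmem
  obtain ⟨x, hx, hxne⟩ := (Submodule.ne_bot_iff _).mp hK
  obtain ⟨r, hr⟩ := hx.1
  have hx' : a * r = x := hr
  refine ⟨r, ?_, ?_⟩
  · rw [hx']
    exact hxne
  · rw [hx']
    exact mem_rAnnI_singleton'.mp hx.2

lemma zProd_nilpotent (hacc : ACCOnRightAnnihilators R) :
    ∃ N : ℕ, ∀ p ∈ zProd R (N + 1), p = 0 := by
  obtain ⟨N, hN⟩ := hacc (fun n => rAnn R (zProd R (n + 1)))
    (fun n => ⟨_, rfl⟩) (fun n => rAnn_zProd_mono n)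
  refine ⟨N, ?_⟩
  by_contra h
  push_neg at h
  obtain ⟨p0, hp0, hp0ne⟩ := h
  set P : R → Prop := fun a => ∃ p ∈ zProd R (N + 1), p * a ≠ 0 with hP
  have h1 : P 1 := ⟨p0, hp0, by rwa [mul_one]⟩
  obtain ⟨a, hPa, hmax⟩ := exists_max_ann hacc P 1 h1
  obtain ⟨p, hp, hpa⟩ := hPa
  have hane : a ≠ 0 := fun h => hpa (by rw [h, mul_zero])
  have key : ∀ z ∈ rSingular R, ∀ q ∈ zProd R (N + 1), q * (z * a) = 0 := by
    intro z hz
    by_contra h2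
    push_neg at h2
    obtain ⟨q, hq, hqza⟩ := h2
    have hsub : rAnn R {a} ⊆ rAnn R {z * a} := by
      intro x hx y hy
      rw [Set.mem_singleton_iff.mp hy]
      have hax : a * x = 0 := hx a rfl
      rw [mul_assoc, hax, mul_zero]
    have heq : rAnn R {z * a} = rAnn R {a} := hmax (z * a) ⟨q, hq, hqza⟩ hsub
    obtain ⟨r, har, hzar⟩ := exists_kill hz hane
    have hrmem : r ∈ rAnn R {z * a} := by
      intro y hy
      rw [Set.mem_singleton_iff.mp hy, mul_assoc]
      exact hzar
    rw [heq] at hrmem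
    exact har (hrmem a rfl)
  have ha2 : a ∈ rAnn R (zProd R (N + 2)) := by
    intro q hq
    obtain ⟨p', hp', z, hz, rfl⟩ := zProd_decomp hq
    rw [mul_assoc]
    exact key z hz p' hp'
  have hstab : rAnn R (zProd R (N + 2)) = rAnn R (zProd R (N + 1)) :=
    hN (N + 1) (Nat.le_succ N)
  rw [hstab] at ha2
  exact hpa (ha2 p hp)

end AuxProof

/-- Right mininjective with ACC on right annihilators and essential right socle:
`J = l(S_r) = Z_r` is nilpotent. -/
theorem stmt13 {R : Type*} [Ring R] (hmin : IsRightMininjective R)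
    (hacc : ACCOnRightAnnihilators R) (hess : IsEssentialRIdeal R (rSocle R)) :
    jacobsonSet R = lAnn R (rSocle R : Set R) ∧ jacobsonSet R = rSingular R ∧
      IsNilpotentSet R (jacobsonSet R) :=  by
  have hZL : rSingular R ⊆ lAnn R (rSocle R : Set R) := rSingular_subset_lAnn
  have hLZ : lAnn R (rSocle R : Set R) ⊆ rSingular R := lAnn_subset_rSingular hess
  have hJL : jacobsonSet R ⊆ lAnn R (rSocle R : Set R) := jac_subset_lAnn hmin
  obtain ⟨N, hnil⟩ := zProd_nilpotent (R := R) hacc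
  have hLJ : lAnn R (rSocle R : Set R) ⊆ jacobsonSet R := by
    intro a ha
    show a ∈ TwoSidedIdeal.jacobson ⊥
    rw [TwoSidedIdeal.mem_jacobson_iff]
    intro y
    have hya : y * a ∈ rSingular R := by
      apply hLZ
      intro s hs
      rw [mul_assoc, ha s hs, mul_zero]
    have hnilya : (y * a) ^ (N + 1) = 0 := by
      have := hnil ((y * a) ^ (N + 1))
        ⟨fun _ => y * a, fun _ => hya, by rw [List.ofFn_const, List.prod_replicate]⟩
      exact this
    have hu : IsUnit (1 + y * a) := IsNilpotent.isUnit_one_add ⟨N + 1, hnilya⟩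
    obtain ⟨u, hu⟩ := hu
    refine ⟨↑u⁻¹, ?_⟩
    rw [TwoSidedIdeal.mem_bot]
    have hinv : (↑u⁻¹ : R) * (1 + y * a) = 1 := by rw [← hu]; exact u.inv_mul
    have h2 : (↑u⁻¹ : R) * y * a + ↑u⁻¹ - 1 = ↑u⁻¹ * (1 + y * a) - 1 := by
      rw [mul_add, mul_one, ← mul_assoc, add_comm]
    rw [h2, hinv, sub_self]
  have e1 : jacobsonSet R = lAnn R (rSocle R : Set R) := Set.Subset.antisymm hJL hLJ
  have e2 : lAnn R (rSocle R : Set R) = rSingular R := Set.Subset.antisymm hLZ hZL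
  refine ⟨e1, e1.trans e2, ⟨N, fun f hf => ?_⟩⟩
  exact hnil _ ⟨f, fun i => hLZ (hJL (hf i)), rfl⟩
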